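/- arXiv:2406.14160 — 7 statements merged into one kernel-verified Lean document; each statement's English description precedes it below -/
import Mathlib

section
/- The real vector space of d-dimensional zero-sum matrices of order n (matrices whose entries sum to 0 along every line) has dimension (n−1)^d. -/
/-! Slicing along the first coordinate identifies a zero-sum matrix of dimension `d + 1` with an
`n`-tuple of zero-sum matrices of dimension `d` whose sum is zero: the lines through the other
coordinates lie in a slice, and the lines along the first coordinate are the entries of the sum.
In any space `W`, the `n`-tuples summing to zero form the kernel of the surjective summation map
`Wⁿ → W`, of dimension `(n - 1) · dim W`, so each extra coordinate multiplies the dimension by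
`n - 1`. -/

/-- The linear subspace of `d`-dimensional zero-sum matrices of order `n`. -/
def zeroSumSubmodule (n d : ℕ) : Submodule ℝ ((Fin d → Fin n) → ℝ) where
  carrier := {A | ∀ (α : Fin d → Fin n) (i : Fin d), ∑ j : Fin n, A (Function.update α i j) = 0}
  add_mem' := by
    intro a b ha hb α i
    simp only [Pi.add_apply, Finset.sum_add_distrib, ha α i, hb α i, add_zero]
  zero_mem' := by intro α i; simp
  smul_mem' := by
    intro c a ha α i
    simp only [Pi.smul_apply, smul_eq_mul, ← Finset.mul_sum, ha α i, mul_zero]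

open Module

theorem finrank_ker_sum_proj {K W ι : Type*} [Field K] [AddCommGroup W] [Module K W]
    [FiniteDimensional K W] [Fintype ι] :
    finrank K (LinearMap.ker (∑ j : ι, LinearMap.proj (R := K) (φ := fun _ : ι => W) j)) =
      (Fintype.card ι - 1) * finrank K W := by
  classical
  set σ := ∑ j : ι, LinearMap.proj (R := K) (φ := fun _ : ι => W) j
  rcases isEmpty_or_nonempty ι with hι | ⟨⟨j₀⟩⟩
  · simp [finrank_zero_of_subsingleton]
  have hσ : Function.Surjective σ := fun w => ⟨Pi.single j₀ w, by simp [σ]⟩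
  have hrank := σ.finrank_range_add_finrank_ker
  rw [LinearMap.range_eq_top.2 hσ, finrank_top, finrank_pi_fintype, Finset.sum_const,
    Finset.card_univ, smul_eq_mul] at hrank
  rw [Nat.sub_mul, one_mul]
  omega

namespace zeroSumSubmodule

variable {n d : ℕ}

theorem dim_zero_eq_top : zeroSumSubmodule n 0 = ⊤ :=
  eq_top_iff.2 fun _ _ _ i => i.elim0

theorem mem_succ_iff {A : (Fin (d + 1) → Fin n) → ℝ} :
    A ∈ zeroSumSubmodule n (d + 1) ↔
      (∀ j, (fun β => A (Fin.cons j β)) ∈ zeroSumSubmodule n d) ∧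
        ∀ β, ∑ j, A (Fin.cons j β) = 0 := by
  refine ⟨fun hA => ⟨fun j β i => ?_, fun β => ?_⟩, fun ⟨hslice, hsum⟩ α i => ?_⟩
  · simpa [← Fin.cons_update] using hA (Fin.cons j β) i.succ
  · rcases isEmpty_or_nonempty (Fin n) with hn | ⟨⟨j₀⟩⟩
    · simp
    · simpa [Fin.update_cons_zero] using hA (Fin.cons j₀ β) 0
  · induction α using Fin.consCases with | cons j β
    induction i using Fin.cases with
    | zero => simpa [Fin.update_cons_zero] using hsum β
    | succ i => simpa [← Fin.cons_update] using hslice j β i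

variable (n d) in
noncomputable def succEquivKerSum :
    zeroSumSubmodule n (d + 1) ≃ₗ[ℝ]
      LinearMap.ker (∑ j : Fin n,
        LinearMap.proj (R := ℝ) (φ := fun _ : Fin n => zeroSumSubmodule n d) j) where
  toFun A := ⟨fun j => ⟨_, (mem_succ_iff.1 A.2).1 j⟩, by
    ext β
    simpa [Finset.sum_apply] using (mem_succ_iff.1 A.2).2 β⟩
  invFun w := ⟨fun α => (w.1 (α 0)).1 (Fin.tail α), mem_succ_iff.2 ⟨fun j => by simp,
    fun β => by
      have h := congr(($(LinearMap.mem_ker.1 w.2) : _ → ℝ) β)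
      simp only [LinearMap.sum_apply, LinearMap.proj_apply, Submodule.coe_sum,
        Finset.sum_apply] at h
      simpa using h⟩⟩
  map_add' _ _ := rfl
  map_smul' _ _ := rfl
  left_inv A := by ext α; simp
  right_inv w := by ext j β; simp

end zeroSumSubmodule

/-- The space of `d`-dimensional zero-sum matrices of order `n` has dimension `(n-1)^d`. -/
theorem finrank_zeroSum (n d : ℕ) :
    Module.finrank ℝ (zeroSumSubmodule n d) = (n - 1) ^ d := by
  induction d with
  | zero =>
    rw [zeroSumSubmodule.dim_zero_eq_top, finrank_top, finrank_fintype_fun_eq_card]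
    simp
  | succ d ih =>
    rw [(zeroSumSubmodule.succEquivKerSum n d).finrank_eq, finrank_ker_sum_proj, ih,
      Fintype.card_fin, pow_succ, mul_comm]
end

section
/- Let 0 < ε ≤ 1/2 and H(ε) = −ε·log₂ε − (1−ε)·log₂(1−ε). For every d and every natural number N ≤ 2^{d(1−H(ε))}, there exists a set S ⊆ (Fin 2)^d of size N such that any two distinct elements of S have Hamming distance at least εd. -/
/-!
Gilbert–Varshamov by greedy choice. Join two words of `(Fin 2)^d` when their distance is below
`εd`; codes of minimum distance `εd` are the independent sets of this graph, and a graph of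
maximum degree `Δ` on `2^d` vertices has an independent set of every size `N` with
`N (Δ + 1) ≤ 2^d`. The closed neighbourhoods are Hamming balls of radius `εd`, whose volume is at
most `2^{d H(ε)}`: weight each word `y` by `ε^{ρ(x,y)} (1-ε)^{d-ρ(x,y)}`; the weights sum to
`(ε + (1 - ε))^d = 1`, and for `ε ≤ 1/2` every word of the ball weighs at least
`ε^{εd} (1-ε)^{(1-ε)d} = 2^{-d H(ε)}`.
-/

open Finset Real

namespace SimpleGraph

variable {V : Type*} [Fintype V] [DecidableEq V] (G : SimpleGraph V) [DecidableRel G.Adj]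

theorem exists_isIndepSet_card_eq_of_mul_maxDegree_add_one_le {N : ℕ}
    (hN : N * (G.maxDegree + 1) ≤ Fintype.card V) :
    ∃ s : Finset V, #s = N ∧ G.IsIndepSet s := by
  induction N with
  | zero => exact ⟨∅, rfl, by simp⟩
  | succ n ih =>
    obtain ⟨s, hs, hind⟩ := ih (le_trans (by gcongr; omega) hN)
    have hcover : #(s.biUnion fun v => insert v (G.neighborFinset v)) < #(univ : Finset V) :=
      calc #(s.biUnion fun v => insert v (G.neighborFinset v))
          ≤ ∑ v ∈ s, #(insert v (G.neighborFinset v)) := card_biUnion_le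
        _ ≤ ∑ _v ∈ s, (G.maxDegree + 1) := sum_le_sum fun v _ =>
            (card_insert_le _ _).trans (by simpa using G.degree_le_maxDegree v)
        _ < #(univ : Finset V) := by rw [sum_const, hs, card_univ, smul_eq_mul]; nlinarith
    obtain ⟨w, -, hw⟩ := exists_mem_notMem_of_card_lt_card hcover
    simp only [mem_biUnion, mem_insert, mem_neighborFinset, not_exists, not_and, not_or] at hw
    refine ⟨insert w s, ?_, ?_⟩
    · rw [card_insert_of_notMem fun hws => (hw w hws).1 rfl, hs]
    · rw [coe_insert]
      exact hind.insert fun v hv _ => ⟨fun hadj => (hw v hv).2 hadj.symm, (hw v hv).2⟩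

end SimpleGraph

section HammingWeight

variable {ι R : Type*} [Fintype ι] [CommRing R]

theorem prod_ite_ne_eq_pow_hammingDist (p : R) (x y : ι → Fin 2) :
    ∏ i, (if x i ≠ y i then p else 1 - p) =
      p ^ hammingDist x y * (1 - p) ^ (Fintype.card ι - hammingDist x y) := by
  rw [prod_ite, prod_const, prod_const, hammingDist, ← card_univ,
    ← card_filter_add_card_filter_not (s := univ) (fun i => x i ≠ y i), Nat.add_sub_cancel_left]

theorem sum_pow_hammingDist_mul_one_sub_pow [DecidableEq ι] (p : R) (x : ι → Fin 2) :
    ∑ y, p ^ hammingDist x y * (1 - p) ^ (Fintype.card ι - hammingDist x y) = 1 := by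
  rw [sum_congr rfl fun y _ => (prod_ite_ne_eq_pow_hammingDist p x y).symm,
    ← Fintype.prod_sum fun i b => if x i ≠ b then p else 1 - p]
  refine prod_eq_one fun i _ => ?_
  rw [Fin.sum_univ_two]
  generalize x i = a
  fin_cases a <;> simp

end HammingWeight

section Entropy

variable {ε : ℝ}

theorem rpow_mul_one_sub_rpow_le_of_le (hε0 : 0 < ε) (hε : ε ≤ 1 / 2) (n : ℝ) {s t : ℝ}
    (hst : s ≤ t) : ε ^ t * (1 - ε) ^ (n - t) ≤ ε ^ s * (1 - ε) ^ (n - s) := by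
  have h1ε : 0 < 1 - ε := by linarith
  have hrewrite : ∀ u, ε ^ u * (1 - ε) ^ (n - u) = (1 - ε) ^ n * (ε / (1 - ε)) ^ u := fun u => by
    rw [div_rpow hε0.le h1ε.le, rpow_sub h1ε]
    field_simp
  rw [hrewrite, hrewrite]
  gcongr ?_ * ?_
  exact rpow_le_rpow_of_exponent_ge (by positivity) ((div_le_one h1ε).2 (by linarith)) hst

theorem exp_neg_mul_binEntropy (hε0 : 0 < ε) (hε1 : ε < 1) (n : ℝ) :
    exp (-(n * binEntropy ε)) = ε ^ (ε * n) * (1 - ε) ^ (n - ε * n) := by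
  rw [rpow_def_of_pos hε0, rpow_def_of_pos (by linarith), ← exp_add, binEntropy, log_inv,
    log_inv]
  ring_nf

theorem exp_neg_mul_binEntropy_le_pow_mul_pow (hε0 : 0 < ε) (hε : ε ≤ 1 / 2) {k n : ℕ}
    (hkn : k ≤ n) (hk : (k : ℝ) ≤ ε * n) :
    exp (-(n * binEntropy ε)) ≤ ε ^ k * (1 - ε) ^ (n - k) := by
  rw [exp_neg_mul_binEntropy hε0 (by linarith), ← rpow_natCast, ← rpow_natCast,
    Nat.cast_sub hkn]
  exact rpow_mul_one_sub_rpow_le_of_le hε0 hε n hk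

end Entropy

theorem card_hammingDist_le_le_exp_binEntropy {ι : Type*} [Fintype ι] [DecidableEq ι] {ε : ℝ}
    (hε0 : 0 < ε) (hε : ε ≤ 1 / 2) (x : ι → Fin 2) :
    (#{y | (hammingDist x y : ℝ) ≤ ε * Fintype.card ι} : ℝ) ≤
      exp (Fintype.card ι * binEntropy ε) := by
  set n := Fintype.card ι
  have hweight : (#{y | (hammingDist x y : ℝ) ≤ ε * n} : ℝ) * exp (-(n * binEntropy ε)) ≤ 1 :=
    calc (#{y | (hammingDist x y : ℝ) ≤ ε * n} : ℝ) * exp (-(n * binEntropy ε))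
        = ∑ y with (hammingDist x y : ℝ) ≤ ε * n, exp (-(n * binEntropy ε)) := by
          rw [sum_const, nsmul_eq_mul]
      _ ≤ ∑ y with (hammingDist x y : ℝ) ≤ ε * n,
            ε ^ hammingDist x y * (1 - ε) ^ (n - hammingDist x y) :=
          sum_le_sum fun y hy => exp_neg_mul_binEntropy_le_pow_mul_pow hε0 hε
            hammingDist_le_card_fintype (mem_filter.1 hy).2
      _ ≤ ∑ y, ε ^ hammingDist x y * (1 - ε) ^ (n - hammingDist x y) :=
          sum_le_sum_of_subset_of_nonneg (filter_subset _ _) fun y _ _ => by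
            have : 0 ≤ 1 - ε := by linarith
            positivity
      _ = 1 := sum_pow_hammingDist_mul_one_sub_pow ε x
  rwa [exp_neg, ← div_eq_mul_inv, div_le_one (exp_pos _)] at hweight

theorem two_rpow_mul_one_sub_entropy_mul_exp_binEntropy (ε n : ℝ) :
    (2 : ℝ) ^ (n * (1 - (-ε * logb 2 ε - (1 - ε) * logb 2 (1 - ε)))) *
      exp (n * binEntropy ε) = 2 ^ n := by
  have hlog2 : log 2 ≠ 0 := by positivity
  rw [rpow_def_of_pos two_pos, rpow_def_of_pos two_pos, ← exp_add, binEntropy, log_inv, log_inv,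
    logb, logb]
  congr 1
  field_simp
  ring

section ConflictGraph

variable (ι : Type*) {α : Type*} [Fintype ι] [DecidableEq α]

noncomputable def hammingConflictGraph (r : ℝ) : SimpleGraph (ι → α) :=
  SimpleGraph.fromRel fun x y => (hammingDist x y : ℝ) < r

noncomputable instance (r : ℝ) : DecidableRel (hammingConflictGraph ι (α := α) r).Adj :=
  fun x y => inferInstanceAs (Decidable (x ≠ y ∧ _))

variable {ι}

theorem SimpleGraph.IsIndepSet.le_hammingDist {r : ℝ} {S : Set (ι → α)}
    (hS : (hammingConflictGraph ι r).IsIndepSet S) {x y : ι → α} (hx : x ∈ S) (hy : y ∈ S)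
    (hxy : x ≠ y) : r ≤ hammingDist x y := by
  have := hS hx hy hxy
  simp only [hammingConflictGraph, SimpleGraph.fromRel_adj, not_and, not_or, not_lt] at this
  exact (this hxy).1

theorem degree_hammingConflictGraph_add_one_le [Fintype α] [DecidableEq ι] {r : ℝ} (hr : 0 ≤ r)
    (x : ι → α) :
    (hammingConflictGraph ι r).degree x + 1 ≤ #{y | (hammingDist x y : ℝ) ≤ r} := by
  rw [← SimpleGraph.card_neighborFinset_eq_degree,
    ← card_insert_of_notMem (SimpleGraph.notMem_neighborFinset_self _ x)]
  refine card_le_card fun y hy => ?_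
  rcases mem_insert.1 hy with rfl | hy
  · simpa using hr
  · rw [SimpleGraph.mem_neighborFinset] at hy
    simp only [hammingConflictGraph, SimpleGraph.fromRel_adj, hammingDist_comm y x, or_self] at hy
    simpa using hy.2.le

end ConflictGraph

/-- Gilbert–Varshamov type bound: for `0 < ε ≤ 1/2` and `N ≤ 2^{d(1 - H(ε))}`, there is a
binary code of length `d`, size `N`, and minimum Hamming distance at least `ε d`. -/
theorem binary_code_exists (ε : ℝ) (hε0 : 0 < ε) (hε : ε ≤ 1/2) (d N : ℕ)
    (hN : (N : ℝ) ≤ (2 : ℝ) ^ ((d : ℝ) * (1 - (-ε * Real.logb 2 ε - (1 - ε) * Real.logb 2 (1 - ε))))) :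
    ∃ S : Finset (Fin d → Fin 2), S.card = N ∧
      ∀ α ∈ S, ∀ β ∈ S, α ≠ β → ε * d ≤ (hammingDist α β : ℝ) := by
  set G := hammingConflictGraph (Fin d) (α := Fin 2) (ε * d)
  have hdeg : (G.maxDegree + 1 : ℝ) ≤ exp (d * binEntropy ε) := by
    obtain ⟨x, hx⟩ := G.exists_maximal_degree_vertex
    calc (G.maxDegree + 1 : ℝ) ≤ #{y | (hammingDist x y : ℝ) ≤ ε * d} := by
          rw [hx]; exact_mod_cast degree_hammingConflictGraph_add_one_le (by positivity) x
      _ ≤ exp (d * binEntropy ε) := by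
          simpa using card_hammingDist_le_le_exp_binEntropy hε0 hε x
  have hcard : N * (G.maxDegree + 1) ≤ Fintype.card (Fin d → Fin 2) := by
    have : (N * (G.maxDegree + 1) : ℝ) ≤ 2 ^ d := calc
      _ ≤ 2 ^ ((d : ℝ) * (1 - (-ε * logb 2 ε - (1 - ε) * logb 2 (1 - ε)))) *
            exp (d * binEntropy ε) := by gcongr
      _ = 2 ^ d := by rw [two_rpow_mul_one_sub_entropy_mul_exp_binEntropy, rpow_natCast]
    simpa using (by exact_mod_cast this : N * (G.maxDegree + 1) ≤ 2 ^ d)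
  obtain ⟨S, hS, hind⟩ := G.exists_isIndepSet_card_eq_of_mul_maxDegree_add_one_le hcard
  exact ⟨S, hS, fun x hx y hy hxy => hind.le_hammingDist hx hy hxy⟩
end

section
/- Let 0 < ε ≤ 1/2. For every N ≤ 2^{(1−H(ε))d} there exists an ε-sparse set S ⊆ (Fin 3)^d of size N, where H is the binary entropy function. -/
/-- A set `S ⊆ (Fin 3)^d` is `ε`-sparse if pairwise Hamming distances are at least `εd`
and every `α ∈ S` is the unique element of `S` at distance `d` from some index `γ`. -/
def EpsSparse {d : ℕ} (ε : ℝ) (S : Finset (Fin d → Fin 3)) : Prop :=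
  (∀ α ∈ S, ∀ β ∈ S, α ≠ β → ε * d ≤ (hammingDist α β : ℝ)) ∧
  ∀ α ∈ S, ∃ γ : Fin d → Fin 3, S.filter (fun β => hammingDist γ β = d) = {α}

/-!
Take a binary code of minimum distance greater than `εd`: by Gilbert–Varshamov it exists as soon
as `N` times the volume of the Hamming ball of radius `εd`, which is at most `2^{H(ε)d}`, is at
most `2^d`. Viewed inside `(Fin 3)^d`, each codeword `x` is isolated by its bitwise complement,
which differs from `x` in all `d` coordinates but agrees with every other binary word somewhere.
-/

open Finset Real

section Hamming

variable {ι α : Type*} [Fintype ι]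

lemma hammingDist_eq_card_iff [DecidableEq α] {x y : ι → α} :
    hammingDist x y = Fintype.card ι ↔ ∀ i, x i ≠ y i := by
  simp [hammingDist, ← card_univ, card_filter_eq_iff]

/-- Gilbert–Varshamov, by the greedy construction. -/
theorem exists_card_eq_pairwise_le_hammingDist [DecidableEq ι] [Fintype α] [Nonempty α]
    [DecidableEq α] {n V : ℕ} (hn : 0 < n) (hV : ∀ x : ι → α, #{y | hammingDist x y < n} ≤ V)
    (N : ℕ) (hN : N * V ≤ Fintype.card α ^ Fintype.card ι) :
    ∃ S : Finset (ι → α), #S = N ∧ (S : Set (ι → α)).Pairwise fun x y => n ≤ hammingDist x y := by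
  induction N with
  | zero => exact ⟨∅, by simp⟩
  | succ N ih =>
    obtain ⟨S, hcard, hS⟩ := ih ((Nat.mul_le_mul_right V N.le_succ).trans hN)
    have hV₀ : 0 < V := (card_pos.2 ⟨fun _ => Classical.arbitrary α, by simp [hn]⟩).trans_le
      (hV fun _ => Classical.arbitrary α)
    have hcover : #(S.biUnion fun x => {y | hammingDist x y < n}) < #(univ : Finset (ι → α)) :=
      calc _ ≤ ∑ x ∈ S, #{y | hammingDist x y < n} := card_biUnion_le
        _ ≤ N * V := by simpa [hcard] using sum_le_sum fun x (_ : x ∈ S) => hV x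
        _ < (N + 1) * V := by nlinarith
        _ ≤ _ := by simpa [Fintype.card_fun] using hN
    obtain ⟨z, -, hz⟩ := exists_mem_notMem_of_card_lt_card hcover
    simp only [mem_biUnion, mem_filter, mem_univ, true_and, not_exists, not_and, not_lt] at hz
    have hzS : z ∉ S := fun h => by simpa [hn.ne'] using hz z h
    refine ⟨insert z S, by rw [card_insert_of_notMem hzS, hcard], ?_⟩
    rw [coe_insert, Set.pairwise_insert]
    exact ⟨hS, fun y hy _ => ⟨hammingDist_comm z y ▸ hz y hy, hz y hy⟩⟩

lemma card_hammingDist_lt_le_sum_choose [DecidableEq ι] (x : ι → Fin 2) (n : ℕ) :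
    #{y | hammingDist x y < n} ≤ ∑ i ∈ range n, (Fintype.card ι).choose i := by
  have hinj : Set.InjOn (fun y : ι → Fin 2 => ({i | x i ≠ y i} : Finset ι)) Set.univ := by
    intro y _ z _ h
    funext i
    have hi := congrArg (i ∈ ·) h
    simp only [mem_filter, mem_univ, true_and, eq_iff_iff] at hi
    revert hi
    generalize x i = a; generalize y i = b; generalize z i = c
    decide +revert
  calc #{y | hammingDist x y < n}
      ≤ #((range n).biUnion fun i => powersetCard i (univ : Finset ι)) :=
        card_le_card_of_injOn _ (fun y hy => by simpa [hammingDist] using hy)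
          (hinj.mono (Set.subset_univ _))
    _ ≤ ∑ i ∈ range n, #(powersetCard i (univ : Finset ι)) := card_biUnion_le
    _ = _ := by simp [card_powersetCard]

end Hamming

/-- Comparing each term with the binomial distribution `B(d, p)`: for `i ≤ pd ≤ d/2`,
`p^i (1-p)^(d-i) ≥ p^(pd) (1-p)^((1-p)d) = exp (-H(p) d)`. -/
theorem sum_range_choose_le_exp_binEntropy_mul {p : ℝ} (hp₀ : 0 < p) (hp : p ≤ 1 / 2)
    {d k : ℕ} (hk : (k : ℝ) ≤ p * d) :
    ∑ i ∈ range (k + 1), (d.choose i : ℝ) ≤ exp (binEntropy p * d) := by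
  have hq : 0 < 1 - p := by linarith
  have hlog : log p ≤ log (1 - p) := log_le_log hp₀ (by linarith)
  have hkd : k ≤ d := by
    have : p * d ≤ d := by nlinarith [(d.cast_nonneg : (0 : ℝ) ≤ d)]
    exact_mod_cast hk.trans this
  have hterm : ∀ i ≤ k, exp (-(binEntropy p * d)) ≤ p ^ i * (1 - p) ^ (d - i) := by
    intro i hi
    have hi' : (i : ℝ) ≤ p * d := (Nat.cast_le.2 hi).trans hk
    rw [← le_log_iff_exp_le (by positivity), log_mul (by positivity) (by positivity), log_pow,
      log_pow, Nat.cast_sub (hi.trans hkd), binEntropy, log_inv, log_inv]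
    nlinarith [mul_nonneg (sub_nonneg.2 hi') (sub_nonneg.2 hlog)]
  have hmass : (∑ i ∈ range (k + 1), (d.choose i : ℝ)) * exp (-(binEntropy p * d)) ≤ 1 :=
    calc _ = ∑ i ∈ range (k + 1), exp (-(binEntropy p * d)) * d.choose i := by
          rw [sum_mul]; simp_rw [mul_comm]
      _ ≤ ∑ i ∈ range (k + 1), p ^ i * (1 - p) ^ (d - i) * d.choose i :=
          sum_le_sum fun i hi =>
            mul_le_mul_of_nonneg_right (hterm i (Nat.lt_succ_iff.1 (mem_range.1 hi))) (by positivity)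
      _ ≤ ∑ i ∈ range (d + 1), p ^ i * (1 - p) ^ (d - i) * d.choose i :=
          sum_le_sum_of_subset_of_nonneg (range_subset_range.2 (by omega))
            fun _ _ _ => by positivity
      _ = 1 := by rw [← add_pow]; simp
  rwa [exp_neg, ← div_eq_mul_inv, div_le_one (exp_pos _)] at hmass

lemma two_rpow_eq_exp_binEntropy_mul (p x : ℝ) :
    (2 : ℝ) ^ ((-p * logb 2 p - (1 - p) * logb 2 (1 - p)) * x) = exp (binEntropy p * x) := by
  rw [rpow_def_of_pos two_pos]
  congr 1
  simp only [binEntropy, log_inv, logb]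
  field_simp
  ring

def binaryToTernary (d : ℕ) : (Fin d → Fin 2) ↪ (Fin d → Fin 3) :=
  Fin.castSuccEmb.arrowCongrRight

lemma hammingDist_rev_binaryToTernary_eq_iff {d : ℕ} (x z : Fin d → Fin 2) :
    hammingDist (binaryToTernary d (Fin.rev ∘ x)) (binaryToTernary d z) = d ↔ z = x := by
  have h := hammingDist_eq_card_iff (x := binaryToTernary d (Fin.rev ∘ x))
    (y := binaryToTernary d z)
  rw [Fintype.card_fin] at h
  rw [h, funext_iff]
  refine forall_congr' fun i => ?_
  simp only [binaryToTernary, Function.Embedding.arrowCongrRight_apply, Function.comp_apply,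
    Fin.castSuccEmb_apply]
  generalize x i = a; generalize z i = b
  decide +revert

lemma epsSparse_map_binaryToTernary {d : ℕ} {ε : ℝ} {S : Finset (Fin d → Fin 2)}
    (hS : (S : Set (Fin d → Fin 2)).Pairwise fun x y => ε * d ≤ hammingDist x y) :
    EpsSparse ε (S.map (binaryToTernary d)) := by
  refine ⟨?_, ?_⟩
  · simp only [mem_map]
    rintro _ ⟨x, hx, rfl⟩ _ ⟨y, hy, rfl⟩ hxy
    calc ε * d ≤ hammingDist x y := hS hx hy fun h => hxy (h ▸ rfl)
      _ = _ := congrArg _ (hammingDist_comp (fun _ => Fin.castSuccEmb)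
        fun _ => Fin.castSuccEmb.injective).symm
  · simp only [mem_map]
    rintro _ ⟨x, hx, rfl⟩
    refine ⟨binaryToTernary d (Fin.rev ∘ x), ?_⟩
    ext y
    simp only [mem_filter, mem_map, mem_singleton]
    constructor
    · rintro ⟨⟨z, -, rfl⟩, hz⟩
      rw [(hammingDist_rev_binaryToTernary_eq_iff x z).1 hz]
    · rintro rfl
      exact ⟨⟨x, hx, rfl⟩, (hammingDist_rev_binaryToTernary_eq_iff x x).2 rfl⟩

/-- For `0 < ε ≤ 1/2` and every `N ≤ 2^{(1 - H(ε)) d}` there is an `ε`-sparse set of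
size `N` in `(Fin 3)^d`. -/
theorem eps_sparse_exists (ε : ℝ) (hε0 : 0 < ε) (hε : ε ≤ 1/2) (d N : ℕ)
    (hN : (N : ℝ) ≤ (2 : ℝ) ^ ((1 - (-ε * Real.logb 2 ε - (1 - ε) * Real.logb 2 (1 - ε))) * d)) :
    ∃ S : Finset (Fin d → Fin 3), S.card = N ∧ EpsSparse ε S := by
  set H := -ε * logb 2 ε - (1 - ε) * logb 2 (1 - ε) with hH
  have hvol := sum_range_choose_le_exp_binEntropy_mul hε0 hε (d := d)
    (Nat.floor_le (by positivity))
  rw [← two_rpow_eq_exp_binEntropy_mul, ← hH] at hvol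
  have hNV : N * ∑ i ∈ range (⌊ε * d⌋₊ + 1), d.choose i ≤ 2 ^ d := by
    have : (N : ℝ) * ∑ i ∈ range (⌊ε * d⌋₊ + 1), (d.choose i : ℝ) ≤ 2 ^ d :=
      calc _ ≤ (2 : ℝ) ^ ((1 - H) * d) * 2 ^ (H * d) :=
            mul_le_mul hN hvol (by positivity) (by positivity)
        _ = 2 ^ d := by rw [← rpow_add two_pos, ← add_mul, sub_add_cancel, one_mul, rpow_natCast]
    exact_mod_cast this
  obtain ⟨S, hcard, hS⟩ := exists_card_eq_pairwise_le_hammingDist (Nat.succ_pos ⌊ε * d⌋₊)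
    (card_hammingDist_lt_le_sum_choose (ι := Fin d) · _) N (by simpa using hNV)
  refine ⟨S.map (binaryToTernary d), by rw [card_map, hcard], epsSparse_map_binaryToTernary ?_⟩
  exact hS.mono' fun x y (h : ⌊ε * d⌋₊ + 1 ≤ hammingDist x y) =>
    (Nat.lt_floor_add_one _).le.trans (by exact_mod_cast h)
end

section
/- Let S ⊆ (Fin 3)^d be a set such that any two distinct elements are at Hamming distance at least εd, and let |S| = N. Define M' = ∑_{α∈S} F^α where F^α_β = (−1/2)^{ρ(α,β)}. Then for every α ∈ S, |1 − M'_α| ≤ N·2^{−εd}. -/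
/-! The diagonal term `γ = α` contributes exactly `1`, and every other term has absolute value
`2 ^ (-ρ(γ, α)) ≤ 2 ^ (-εd)` by the distance assumption. -/

open Finset

lemma abs_sum_sub_self_le_card_erase_mul {ι : Type*} [DecidableEq ι] {S : Finset ι} {a : ι}
    (ha : a ∈ S) {f : ι → ℝ} {c : ℝ} (hf : ∀ b ∈ S, b ≠ a → |f b| ≤ c) :
    |∑ b ∈ S, f b - f a| ≤ #(S.erase a) * c := by
  rw [← add_sum_erase S f ha, add_sub_cancel_left, ← nsmul_eq_mul, ← sum_const]
  exact (abs_sum_le_sum_abs _ _).trans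
    (sum_le_sum fun b hb => hf b (mem_of_mem_erase hb) (ne_of_mem_erase hb))

lemma abs_neg_half_pow_le_two_rpow_neg {n : ℕ} {x : ℝ} (hx : x ≤ n) :
    |(-1/2 : ℝ) ^ n| ≤ (2 : ℝ) ^ (-x) := by
  have h : |(-1/2 : ℝ) ^ n| = (2 : ℝ) ^ (-(n : ℝ)) := by
    rw [abs_pow, Real.rpow_neg zero_le_two, Real.rpow_natCast, abs_div, abs_neg, abs_one, abs_two, one_div, inv_pow]
  rw [h]
  exact Real.rpow_le_rpow_of_exponent_le one_le_two (neg_le_neg hx)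

/-- If elements of `S` are pairwise at Hamming distance at least `εd` and
`M' = ∑_{γ ∈ S} F^γ` with `F^γ_β = (-1/2)^{ρ(γ,β)}`, then for every `α ∈ S`,
`|1 - M'_α| ≤ N · 2^{-εd}` where `N = |S|`. -/
theorem Mprime_close_to_one {d : ℕ} (ε : ℝ) (S : Finset (Fin d → Fin 3))
    (hdist : ∀ α ∈ S, ∀ β ∈ S, α ≠ β → ε * d ≤ (hammingDist α β : ℝ)) :
    ∀ α ∈ S,
      |1 - ∑ γ ∈ S, ((-1/2 : ℝ)) ^ (hammingDist γ α)| ≤ (S.card : ℝ) * (2 : ℝ) ^ (-(ε * d)) := by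
  intro α hα
  have hdiag : (-1/2 : ℝ) ^ hammingDist α α = 1 := by rw [hammingDist_self, pow_zero]
  have hcard : (#(S.erase α) : ℝ) ≤ #S := by exact_mod_cast card_le_card (erase_subset α S)
  calc |1 - ∑ γ ∈ S, (-1/2 : ℝ) ^ hammingDist γ α|
      = |∑ γ ∈ S, (-1/2 : ℝ) ^ hammingDist γ α - (-1/2 : ℝ) ^ hammingDist α α| := by
        rw [abs_sub_comm, hdiag]
    _ ≤ #(S.erase α) * (2 : ℝ) ^ (-(ε * d)) :=
        abs_sum_sub_self_le_card_erase_mul hα fun γ hγ hne =>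
          abs_neg_half_pow_le_two_rpow_neg (hdist γ hγ α hα hne)
    _ ≤ #S * (2 : ℝ) ^ (-(ε * d)) := by gcongr
end

section
/- Let d ≥ 14/ε and let S ⊆ (Fin 3)^d be an ε-sparse set with |S| ≤ 2^{εd/4}. Then there exists a d-dimensional polystochastic matrix A of order 3 whose support is exactly (Fin 3)^d ∖ S. -/
/-- A matrix is polystochastic if nonnegative with all line sums 1. -/
def Polystochastic {n d : ℕ} (A : (Fin d → Fin n) → ℝ) : Prop :=
  (∀ α, 0 ≤ A α) ∧ ∀ (α : Fin d → Fin n) (i : Fin d), ∑ j : Fin n, A (Function.update α i j) = 1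

/-!
Put `B_α(β) = (-1/2)^{ρ(α,β)}`. As a tensor power of a matrix with zero row sums, each `B_α`
has zero line sums, so `A = J/3 - ∑_{α ∈ S} t_α B_α` has all line sums `1` whatever the
coefficients `t`. Vanishing of `A` on `S` is a linear system in `t` with unit diagonal whose
off-diagonal entries are tiny by the separation of `S` and the bound on `|S|`; the Jacobi
iteration is then a contraction, giving a solution with `|t_α| ≤ 8/21`. Off `S`, at most one
`α ∈ S` lies within `εd/2` of `β` and contributes at most `1/2`, the others at most
`|S| 2^{-εd/2} ≤ 1/8` in total, so `A(β) ≥ 1/3 - (8/21)(5/8) > 0`.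
-/

open Finset Function
open scoped NNReal

theorem abs_sum_mul_le_mul_sum_abs {ι : Type*} (s : Finset ι) {f g : ι → ℝ} {M : ℝ}
    (hf : ∀ i ∈ s, |f i| ≤ M) : |∑ i ∈ s, f i * g i| ≤ M * ∑ i ∈ s, |g i| := by
  rw [mul_sum]
  refine (abs_sum_le_sum_abs _ _).trans (sum_le_sum fun i hi => ?_)
  rw [abs_mul]
  exact mul_le_mul_of_nonneg_right (hf i hi) (abs_nonneg _)

section DiagonallyDominant

variable {ι : Type*} [Fintype ι] [DecidableEq ι]

noncomputable def jacobiStep (S : Finset ι) (K : ι → ι → ℝ) (c : ℝ)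
    (t : ι → ℝ) : ι → ℝ :=
  fun β => if β ∈ S then c - ∑ α ∈ S.erase β, t α * K α β else 0

theorem contractingWith_jacobiStep (S : Finset ι) (K : ι → ι → ℝ) (c : ℝ)
    {q : ℝ≥0} (hq : q < 1) (hrow : ∀ β ∈ S, ∑ α ∈ S.erase β, |K α β| ≤ q) :
    ContractingWith q (jacobiStep S K c) := by
  refine ⟨hq, LipschitzWith.of_dist_le_mul fun t s => ?_⟩
  refine (dist_pi_le_iff (by positivity)).2 fun β => ?_
  by_cases hβ : β ∈ S
  · have hdiff : jacobiStep S K c t β - jacobiStep S K c s β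
        = ∑ α ∈ S.erase β, (s α - t α) * K α β := by
      simp only [jacobiStep, if_pos hβ, sub_mul, sum_sub_distrib]
      ring
    calc dist (jacobiStep S K c t β) (jacobiStep S K c s β)
        = |∑ α ∈ S.erase β, (s α - t α) * K α β| := by rw [Real.dist_eq, hdiff]
      _ ≤ dist t s * ∑ α ∈ S.erase β, |K α β| :=
          abs_sum_mul_le_mul_sum_abs _ fun α _ => by
            rw [abs_sub_comm, ← Real.dist_eq]; exact dist_le_pi_dist t s α
      _ ≤ q * dist t s := by
          rw [mul_comm]; exact mul_le_mul_of_nonneg_right (hrow β hβ) dist_nonneg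
  · simp only [jacobiStep, if_neg hβ, dist_self]
    positivity

theorem exists_bounded_solution_of_diagDominant (S : Finset ι) (K : ι → ι → ℝ)
    (hdiag : ∀ β ∈ S, K β β = 1) {q : ℝ≥0} (hq : q < 1)
    (hrow : ∀ β ∈ S, ∑ α ∈ S.erase β, |K α β| ≤ q) (c : ℝ) :
    ∃ t : ι → ℝ, (∀ β ∈ S, ∑ α ∈ S, t α * K α β = c) ∧ ∀ α, |t α| ≤ |c| / (1 - q) := by
  have hΦ := contractingWith_jacobiStep S K c hq hrow
  set t := hΦ.fixedPoint
  have hfix : ∀ β, jacobiStep S K c t β = t β := fun β =>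
    congrFun hΦ.fixedPoint_isFixedPt β
  refine ⟨t, fun β hβ => ?_, fun α => ?_⟩
  · have htβ := hfix β
    simp only [jacobiStep, if_pos hβ] at htβ
    rw [← add_sum_erase S _ hβ, hdiag β hβ, mul_one]
    linarith
  · have hΦ0 : ‖jacobiStep S K c 0‖ ≤ |c| :=
      (pi_norm_le_iff_of_nonneg (abs_nonneg c)).2 fun β => by
        by_cases hβ : β ∈ S <;> simp [jacobiStep, hβ]
    have h1q : (0 : ℝ) < 1 - q := sub_pos.2 (by exact_mod_cast hq)
    calc |t α| ≤ ‖t‖ := by simpa using norm_le_pi_norm t α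
      _ = dist 0 t := by rw [dist_comm, dist_zero_right]
      _ ≤ dist 0 (jacobiStep S K c 0) / (1 - q) := hΦ.dist_fixedPoint_le 0
      _ ≤ |c| / (1 - q) := by
          rw [dist_comm, dist_zero_right]; gcongr

end DiagonallyDominant

section HammingKernel

variable {n d : ℕ}

/-- The `d`-th tensor power of the `n × n` matrix with `1` on the diagonal and `-1/(n-1)`
elsewhere, whose rows sum to zero. -/
noncomputable def hammingKernel (n : ℕ) (α β : Fin d → Fin n) : ℝ :=
  ∏ i, if α i = β i then 1 else -((n : ℝ) - 1)⁻¹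

theorem hammingKernel_eq_pow (α β : Fin d → Fin n) :
    hammingKernel n α β = (-((n : ℝ) - 1)⁻¹) ^ hammingDist α β := by
  rw [hammingKernel, prod_ite, prod_const_one, one_mul, prod_const, hammingDist]

@[simp]
theorem hammingKernel_self (α : Fin d → Fin n) : hammingKernel n α α = 1 := by
  simp [hammingKernel]

theorem abs_hammingKernel (hn : 1 ≤ n) (α β : Fin d → Fin n) :
    |hammingKernel n α β| = ((n : ℝ) - 1)⁻¹ ^ hammingDist α β := by
  have : (0 : ℝ) ≤ n - 1 := sub_nonneg.2 (by exact_mod_cast hn)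
  rw [hammingKernel_eq_pow, abs_pow, abs_neg, abs_inv, abs_of_nonneg this]

theorem sum_hammingKernel_update (hn : 2 ≤ n) (α β : Fin d → Fin n) (i : Fin d) :
    ∑ j : Fin n, hammingKernel n α (update β i j) = 0 := by
  have hsplit : ∀ j, hammingKernel n α (update β i j) = (if α i = j then 1 else -((n : ℝ) - 1)⁻¹)
      * ∏ k ∈ univ.erase i, if α k = β k then 1 else -((n : ℝ) - 1)⁻¹ := fun j => by
    rw [hammingKernel, ← mul_prod_erase univ _ (mem_univ i), update_self]
    congr 1
    exact prod_congr rfl fun k hk => by rw [update_of_ne (ne_of_mem_erase hk)]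
  have hrow : ∑ j : Fin n, (if α i = j then 1 else -((n : ℝ) - 1)⁻¹) = 0 := by
    rw [← add_sum_erase univ _ (mem_univ (α i)), if_pos rfl,
      sum_congr rfl fun j hj => if_neg (ne_of_mem_erase hj).symm, sum_const,
      card_erase_of_mem (mem_univ _), card_univ, Fintype.card_fin, nsmul_eq_mul,
      Nat.cast_sub (by omega : 1 ≤ n)]
    have : (n : ℝ) - 1 ≠ 0 := by
      rw [sub_ne_zero]; exact_mod_cast (by omega : n ≠ 1)
    field_simp
    ring
  simp_rw [hsplit, ← sum_mul, hrow, zero_mul]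

noncomputable def kernelCombination (n : ℕ) (S : Finset (Fin d → Fin n))
    (t : (Fin d → Fin n) → ℝ) (β : Fin d → Fin n) : ℝ :=
  (n : ℝ)⁻¹ - ∑ α ∈ S, t α * hammingKernel n α β

theorem sum_kernelCombination_update (hn : 2 ≤ n) (S : Finset (Fin d → Fin n))
    (t : (Fin d → Fin n) → ℝ) (β : Fin d → Fin n) (i : Fin d) :
    ∑ j : Fin n, kernelCombination n S t (update β i j) = 1 := by
  have hn0 : (n : ℝ) ≠ 0 := by exact_mod_cast (by omega : n ≠ 0)
  simp only [kernelCombination, sum_sub_distrib, sum_const, card_univ, Fintype.card_fin,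
    nsmul_eq_mul, mul_inv_cancel₀ hn0]
  rw [sum_comm]
  simp [← mul_sum, sum_hammingKernel_update hn]

theorem polystochastic_kernelCombination (hn : 2 ≤ n) {S : Finset (Fin d → Fin n)}
    {t : (Fin d → Fin n) → ℝ} (hnonneg : ∀ β, 0 ≤ kernelCombination n S t β) :
    Polystochastic (kernelCombination n S t) :=
  ⟨hnonneg, sum_kernelCombination_update hn S t⟩

end HammingKernel

theorem sum_inv_two_pow_le_card_mul {ι : Type*} (S : Finset ι) (f : ι → ℕ) (r : ℝ) :
    ∑ x ∈ S with r ≤ f x, (2⁻¹ : ℝ) ^ f x ≤ #S * 2 ^ (-r) := by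
  have hterm : ∀ x ∈ S.filter fun x => r ≤ f x, (2⁻¹ : ℝ) ^ f x ≤ 2 ^ (-r) := fun x hx => by
    rw [inv_pow, ← Real.rpow_natCast, ← Real.rpow_neg zero_le_two]
    exact Real.rpow_le_rpow_of_exponent_le one_le_two (neg_le_neg (mem_filter.1 hx).2)
  calc ∑ x ∈ S with r ≤ f x, (2⁻¹ : ℝ) ^ f x ≤ #(S.filter fun x => r ≤ f x) * 2 ^ (-r) := by
        simpa using sum_le_card_nsmul _ _ _ hterm
    _ ≤ #S * 2 ^ (-r) := by gcongr; exact filter_subset _ _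

theorem card_filter_hammingDist_lt_half_le_one {ι β : Type*} [Fintype ι] [DecidableEq β]
    {S : Finset (ι → β)} {e : ℝ}
    (hsep : ∀ α ∈ S, ∀ α' ∈ S, α ≠ α' → e ≤ hammingDist α α') (γ : ι → β) :
    #{α ∈ S | (hammingDist α γ : ℝ) < e / 2} ≤ 1 := by
  refine card_le_one.2 fun α hα α' hα' => by_contra fun hne => ?_
  rw [mem_filter] at hα hα'
  have htri : (hammingDist α α' : ℝ) ≤ hammingDist α γ + hammingDist α' γ := by
    exact_mod_cast hammingDist_comm α' γ ▸ hammingDist_triangle α γ α'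
  linarith [hsep α hα.1 α' hα'.1 hne]

section SparseEstimates

variable {d : ℕ} {e : ℝ} {S : Finset (Fin d → Fin 3)}

theorem abs_hammingKernel_three (α β : Fin d → Fin 3) :
    |hammingKernel 3 α β| = 2⁻¹ ^ hammingDist α β := by
  rw [abs_hammingKernel (by norm_num)]
  norm_num

theorem sum_far_le (he : 12 ≤ e) (hcard : (#S : ℝ) ≤ 2 ^ (e / 4)) (γ : Fin d → Fin 3) :
    ∑ α ∈ S with e / 2 ≤ hammingDist α γ, (2⁻¹ : ℝ) ^ hammingDist α γ ≤ 1 / 8 :=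
  calc _ ≤ (#S : ℝ) * 2 ^ (-(e / 2)) := sum_inv_two_pow_le_card_mul S _ _
    _ ≤ 2 ^ (e / 4) * 2 ^ (-(e / 2)) := by gcongr
    _ = (2 : ℝ) ^ (-(e / 4)) := by rw [← Real.rpow_add two_pos]; ring_nf
    _ ≤ 2 ^ (-3 : ℝ) := Real.rpow_le_rpow_of_exponent_le one_le_two (by linarith)
    _ = 1 / 8 := by norm_num

theorem sum_erase_abs_hammingKernel_le (he : 12 ≤ e)
    (hsep : ∀ α ∈ S, ∀ α' ∈ S, α ≠ α' → e ≤ hammingDist α α')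
    (hcard : (#S : ℝ) ≤ 2 ^ (e / 4)) {β : Fin d → Fin 3} (hβ : β ∈ S) :
    ∑ α ∈ S.erase β, |hammingKernel 3 α β| ≤ 1 / 8 := by
  have hfar : S.erase β ⊆ S.filter fun α => e / 2 ≤ hammingDist α β := fun α hα =>
    mem_filter.2 ⟨mem_of_mem_erase hα,
      by linarith [hsep α (mem_of_mem_erase hα) β hβ (ne_of_mem_erase hα)]⟩
  simp only [abs_hammingKernel_three]
  exact (sum_le_sum_of_subset_of_nonneg hfar fun _ _ _ => by positivity).trans
    (sum_far_le he hcard β)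

theorem sum_abs_hammingKernel_le_of_notMem (he : 12 ≤ e)
    (hsep : ∀ α ∈ S, ∀ α' ∈ S, α ≠ α' → e ≤ hammingDist α α')
    (hcard : (#S : ℝ) ≤ 2 ^ (e / 4)) {β : Fin d → Fin 3} (hβ : β ∉ S) :
    ∑ α ∈ S, |hammingKernel 3 α β| ≤ 1 / 2 + 1 / 8 := by
  have hnear : ∑ α ∈ S with ¬ e / 2 ≤ hammingDist α β, (2⁻¹ : ℝ) ^ hammingDist α β ≤ 1 / 2 :=
    calc _ ≤ #{α ∈ S | ¬ e / 2 ≤ hammingDist α β} • (2⁻¹ : ℝ) := by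
          refine sum_le_card_nsmul _ _ _ fun α hα => pow_le_of_le_one (by norm_num) (by norm_num) ?_
          exact hammingDist_ne_zero.2 fun h => hβ (h ▸ (mem_filter.1 hα).1)
      _ ≤ 1 • (2⁻¹ : ℝ) := by
          gcongr
          simpa only [not_le] using card_filter_hammingDist_lt_half_le_one hsep β
      _ = 1 / 2 := by norm_num
  simp only [abs_hammingKernel_three]
  rw [← sum_filter_add_sum_filter_not S fun α => e / 2 ≤ hammingDist α β]
  linarith [sum_far_le he hcard β]

end SparseEstimates

/-- If `d ≥ 14/ε` and `S` is `ε`-sparse with `|S| ≤ 2^{εd/4}`, then there is a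
polystochastic matrix of order 3 whose support is exactly the complement of `S`. -/
theorem sparse_to_polystochastic {d : ℕ} (ε : ℝ) (hε : 0 < ε) (hd : 14 / ε ≤ (d : ℝ))
    (S : Finset (Fin d → Fin 3)) (hS : EpsSparse ε S)
    (hcard : (S.card : ℝ) ≤ (2 : ℝ) ^ (ε * d / 4)) :
    ∃ A : (Fin d → Fin 3) → ℝ, Polystochastic A ∧ ∀ α, A α ≠ 0 ↔ α ∉ S := by
  obtain ⟨hsep, -⟩ := hS
  have he : 12 ≤ ε * d := by rw [div_le_iff₀ hε] at hd; linarith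
  obtain ⟨t, hsol, ht⟩ := exists_bounded_solution_of_diagDominant S (hammingKernel 3)
    (fun β _ => hammingKernel_self β) (q := 1 / 8) (by norm_num)
    (fun β hβ => by simpa using sum_erase_abs_hammingKernel_le he hsep hcard hβ) ((3 : ℕ) : ℝ)⁻¹
  have htb : ∀ α, |t α| ≤ 8 / 21 := fun α => (ht α).trans_eq (by norm_num)
  have hzero : ∀ β ∈ S, kernelCombination 3 S t β = 0 := fun β hβ =>
    sub_eq_zero.2 (hsol β hβ).symm
  have hpos : ∀ β ∉ S, 0 < kernelCombination 3 S t β := fun β hβ => by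
    have hbound : |∑ α ∈ S, t α * hammingKernel 3 α β| ≤ 8 / 21 * (1 / 2 + 1 / 8) :=
      (abs_sum_mul_le_mul_sum_abs S fun α _ => htb α).trans <| by
        gcongr; exact sum_abs_hammingKernel_le_of_notMem he hsep hcard hβ
    rw [kernelCombination]
    push_cast
    linarith [(abs_le.1 hbound).2]
  refine ⟨kernelCombination 3 S t, polystochastic_kernelCombination (by norm_num) fun β => ?_,
    fun β => ⟨fun hne hβ => hne (hzero β hβ), fun hβ => (hpos β hβ).ne'⟩⟩
  by_cases hβ : β ∈ S
  · exact (hzero β hβ).ge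
  · exact (hpos β hβ).le
end

section
/- Let C ⊆ (Fin 3)^N be a trifferent code and, for each x ∈ C, let A_x be a matrix on (Fin 3)^{d+1} with supp(A_x) = (Fin 3)^{d+1} ∖ S_x, where S_x = {(α, x_α) : α ∈ S} for a fixed set S of size N (indexing positions of the code). Then for any three distinct x¹, x², x³ ∈ C there is a line ℓ in direction d+1 with supp(A_{x¹}) ∩ supp(A_{x²}) ∩ supp(A_{x³}) ∩ ℓ = ∅. -/
theorem eq_or_eq_or_eq_of_card_eq_three {α : Type*} [Fintype α] [DecidableEq α]
    (hcard : Fintype.card α = 3) {a b c : α} (hab : a ≠ b) (hac : a ≠ c) (hbc : b ≠ c)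
    (j : α) : j = a ∨ j = b ∨ j = c := by
  have hcard_abc : ({a, b, c} : Finset α).card = 3 :=
    Finset.card_eq_three.mpr ⟨a, b, c, hab, hac, hbc, rfl⟩
  have huniv : ({a, b, c} : Finset α) = Finset.univ :=
    Finset.eq_univ_of_card _ (hcard_abc.trans hcard.symm)
  have hj : j ∈ ({a, b, c} : Finset α) := huniv ▸ Finset.mem_univ j
  simpa only [Finset.mem_insert, Finset.mem_singleton] using hj

/-- For matrices `A_x` with support the complement of `S_x = {(α, x_α) : α ∈ S}`, any
three distinct words of a trifferent code give a line in direction `d+1` avoiding the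
intersection of the three supports. -/
theorem trifferent_line {d : ℕ} (S : Finset (Fin d → Fin 3))
    (C : Finset ((Fin d → Fin 3) → Fin 3))
    (htriff : ∀ x ∈ C, ∀ y ∈ C, ∀ z ∈ C, x ≠ y → x ≠ z → y ≠ z →
      ∃ α ∈ S, x α ≠ y α ∧ x α ≠ z α ∧ y α ≠ z α)
    (A : ((Fin d → Fin 3) → Fin 3) → (Fin (d + 1) → Fin 3) → ℝ)
    (hA : ∀ x ∈ C, ∀ β : Fin (d + 1) → Fin 3,
      A x β ≠ 0 ↔ β ∉ S.image (fun α => Fin.snoc α (x α))) :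
    ∀ x ∈ C, ∀ y ∈ C, ∀ z ∈ C, x ≠ y → x ≠ z → y ≠ z →
      ∃ α ∈ S, ∀ j : Fin 3,
        A x (Fin.snoc α j) = 0 ∨ A y (Fin.snoc α j) = 0 ∨ A z (Fin.snoc α j) = 0 := by
  intro x hx y hy z hz hxy hxz hyz
  obtain ⟨α, hαS, hxy_α, hxz_α, hyz_α⟩ := htriff x hx y hy z hz hxy hxz hyz
  have vanish : ∀ w ∈ C, A w (Fin.snoc α (w α)) = 0 := fun w hw =>
    not_not.mp fun hne => (hA w hw _).mp hne (Finset.mem_image_of_mem _ hαS)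
  refine ⟨α, hαS, fun j => ?_⟩
  rcases eq_or_eq_or_eq_of_card_eq_three (Fintype.card_fin 3) hxy_α hxz_α hyz_α j
    with rfl | rfl | rfl
  · exact Or.inl (vanish x hx)
  · exact Or.inr (Or.inl (vanish y hy))
  · exact Or.inr (Or.inr (vanish z hz))
end

section
/- Let 𝒜 be a family of polystochastic matrices of order 3 and dimension d such that for any three distinct A₁, A₂, A₃ ∈ 𝒜 there is no vertex B of the polytope Ω_3^d with supp(B) ⊆ supp(A₁)∩supp(A₂)∩supp(A₃). Then the number of vertices of Ω_3^d is at least |𝒜|/2. -/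
/-- The polytope of polystochastic matrices. -/
def Omega (n d : ℕ) : Set ((Fin d → Fin n) → ℝ) := {A | Polystochastic A}

/-!
Every polystochastic matrix `A` dominates, in the sense of supports, some vertex of `Ω_n^d`:
the matrices of `Ω_n^d` vanishing wherever `A` does form a compact face, whose extreme points
(Krein–Milman) are vertices of `Ω_n^d`. Choosing such a vertex for each member of `𝒜` gives a
map into the vertex set whose fibres have at most two elements, since three members over the
same vertex would violate the hypothesis. The vertex set is finite because a vertex is
determined by its support.
-/

open Set Filter Topology

section Nonneg

variable {ι : Type*}

lemma eq_zero_of_mem_openSegment_of_nonneg {x y z : ι → ℝ} (hx : 0 ≤ x) (hy : 0 ≤ y)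
    (hz : z ∈ openSegment ℝ x y) {i : ι} (hzi : z i = 0) : x i = 0 ∧ y i = 0 := by
  obtain ⟨a, b, ha, hb, -, rfl⟩ := hz
  have hsum : a * x i + b * y i = 0 := hzi
  rw [add_eq_zero_iff_of_nonneg (mul_nonneg ha.le (hx i)) (mul_nonneg hb.le (hy i))] at hsum
  exact ⟨(mul_eq_zero.1 hsum.1).resolve_left ha.ne', (mul_eq_zero.1 hsum.2).resolve_left hb.ne'⟩

lemma isExtreme_setOf_eq_zero {K : Set (ι → ℝ)} (hK : ∀ x ∈ K, 0 ≤ x) (Z : Set ι) :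
    IsExtreme ℝ K {x ∈ K | ∀ i ∈ Z, x i = 0} where
  subset _ hx := hx.1
  left_mem_of_mem_openSegment _ hx _ hy _ hz hxyz :=
    ⟨hx, fun i hi => (eq_zero_of_mem_openSegment_of_nonneg (hK _ hx) (hK _ hy) hxyz
      (hz.2 i hi)).1⟩

lemma zero_mem_extremePoints_of_nonneg {K : Set (ι → ℝ)} (hK : ∀ x ∈ K, 0 ≤ x) (h0 : 0 ∈ K) :
    0 ∈ K.extremePoints ℝ :=
  ⟨h0, fun _ hx _ hy hxy => funext fun _ =>
    (eq_zero_of_mem_openSegment_of_nonneg (hK _ hx) (hK _ hy) hxy rfl).1⟩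

lemma exists_pos_nonneg_add_smul [Finite ι] {x v : ι → ℝ} (hx : 0 ≤ x)
    (hv : ∀ i, x i = 0 → v i = 0) : ∃ ε : ℝ, 0 < ε ∧ 0 ≤ x + ε • v ∧ 0 ≤ x + (-ε) • v := by
  have hnear : ∀ᶠ t in 𝓝 (0 : ℝ), 0 ≤ x + t • v := by
    simp only [Pi.le_def, Pi.add_apply, Pi.smul_apply, smul_eq_mul, Pi.zero_apply,
      eventually_all]
    intro i
    rcases (hx i).eq_or_lt with hxi | hxi
    · simp [← hxi, hv i hxi.symm]
    · have hcont : Continuous fun t : ℝ => x i + t * v i := by fun_prop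
      exact (hcont.tendsto' 0 (x i) (by simp)).eventually (eventually_ge_nhds hxi)
  have hsymm : ∀ᶠ t in 𝓝 (0 : ℝ), 0 ≤ x + t • v ∧ 0 ≤ x + (-t) • v :=
    hnear.and ((continuous_neg.tendsto' 0 0 neg_zero).eventually hnear)
  exact hsymm.exists_gt

end Nonneg

namespace Polystochastic

variable {n d : ℕ} {A A' : (Fin d → Fin n) → ℝ}

lemma add_smul_sub (hA : Polystochastic A) (hA' : Polystochastic A') {t : ℝ}
    (ht : 0 ≤ A + t • (A' - A)) : Polystochastic (A + t • (A' - A)) := by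
  refine ⟨ht, fun α i => ?_⟩
  simp only [Pi.add_apply, Pi.smul_apply, Pi.sub_apply, smul_eq_mul, Finset.sum_add_distrib,
    ← Finset.mul_sum, Finset.sum_sub_distrib, hA.2 α i, hA'.2 α i]
  ring

lemma le_one (hA : Polystochastic A) (hd : d ≠ 0) (α : Fin d → Fin n) : A α ≤ 1 := by
  let i : Fin d := ⟨0, Nat.pos_of_ne_zero hd⟩
  calc A α = A (Function.update α i (α i)) := by rw [Function.update_eq_self]
    _ ≤ ∑ j, A (Function.update α i j) :=
      Finset.single_le_sum (fun j _ => hA.1 _) (Finset.mem_univ _)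
    _ = 1 := hA.2 α i

end Polystochastic

namespace Omega

variable {n d : ℕ}

lemma nonneg {A : (Fin d → Fin n) → ℝ} (hA : A ∈ Omega n d) : 0 ≤ A := hA.1

lemma isClosed : IsClosed (Omega n d) := by
  have hlines : IsClosed {A : (Fin d → Fin n) → ℝ |
      ∀ α i, ∑ j : Fin n, A (Function.update α i j) = 1} := by
    simp only [ofPred_forall]
    exact isClosed_iInter fun α => isClosed_iInter fun i =>
      isClosed_eq (by fun_prop) continuous_const
  exact (isClosed_Ici (a := (0 : (Fin d → Fin n) → ℝ))).inter hlines

lemma subset_Icc (hd : d ≠ 0) : Omega n d ⊆ Icc 0 1 :=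
  fun _ hA => ⟨hA.1, fun α => hA.le_one hd α⟩

lemma eq_of_mem_extremePoints_of_support_subset {B B' : (Fin d → Fin n) → ℝ}
    (hB : B ∈ (Omega n d).extremePoints ℝ) (hB' : B' ∈ Omega n d)
    (hsupp : ∀ β, B β = 0 → B' β = 0) : B' = B := by
  obtain ⟨ε, hε, hplus, hminus⟩ := exists_pos_nonneg_add_smul (v := B' - B) hB.1.1
    fun β hβ => by simp [hβ, hsupp β hβ]
  have hmid : B ∈ openSegment ℝ (B + ε • (B' - B)) (B + (-ε) • (B' - B)) := by
    rw [neg_smul, ← sub_eq_add_neg]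
    exact mem_openSegment_add_sub _ _
  have hfixed := hB.2 (hB.1.add_smul_sub hB' hplus) (hB.1.add_smul_sub hB' hminus) hmid
  rw [add_eq_left, smul_eq_zero, sub_eq_zero] at hfixed
  exact hfixed.resolve_left hε.ne'

lemma finite_extremePoints : ((Omega n d).extremePoints ℝ).Finite := by
  refine Finite.of_finite_image (f := fun B => {β | B β = 0}) (toFinite _) ?_
  intro B hB B' hB' hsupp
  exact (eq_of_mem_extremePoints_of_support_subset hB hB'.1 fun β hβ =>
    (Set.ext_iff.1 hsupp β).1 hβ).symm

end Omega

lemma Polystochastic.exists_mem_extremePoints_support_subset {n d : ℕ}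
    {A : (Fin d → Fin n) → ℝ} (hA : Polystochastic A) :
    ∃ B ∈ (Omega n d).extremePoints ℝ, ∀ β, B β ≠ 0 → A β ≠ 0 := by
  rcases eq_or_ne d 0 with rfl | hd
  · -- `Ω_n^0` has no line constraints: it is the unbounded cone `0 ≤ A`, with the vertex `0`.
    have hzero : (0 : (Fin 0 → Fin n) → ℝ) ∈ Omega n 0 := ⟨fun _ => le_rfl, fun _ i => i.elim0⟩
    exact ⟨0, zero_mem_extremePoints_of_nonneg (fun _ => Omega.nonneg) hzero,
      fun _ h => (h rfl).elim⟩
  set F := {X ∈ Omega n d | ∀ β ∈ {β | A β = 0}, X β = 0}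
  have hface : IsExtreme ℝ (Omega n d) F := isExtreme_setOf_eq_zero (fun _ => Omega.nonneg) _
  have hvanish : IsClosed {X : (Fin d → Fin n) → ℝ | ∀ β ∈ {β | A β = 0}, X β = 0} := by
    simp only [ofPred_forall]
    exact isClosed_iInter fun β => isClosed_iInter fun _ =>
      isClosed_eq (continuous_apply β) continuous_const
  have hF : IsCompact F := isCompact_Icc.of_isClosed_subset (Omega.isClosed.inter hvanish)
    (sep_subset _ _ |>.trans (Omega.subset_Icc hd))
  obtain ⟨B, hB⟩ := hF.extremePoints_nonempty ⟨A, hA, fun _ h => h⟩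
  exact ⟨B, hface.extremePoints_subset_extremePoints hB, fun β hβ hAβ => hβ (hB.1.2 β hAβ)⟩

/-- If no vertex of `Ω_3^d` has its support inside the intersection of the supports of
any three distinct members of a family `𝒜` of polystochastic matrices, then `Ω_3^d` has
at least `|𝒜|/2` vertices. -/
theorem many_vertices {d : ℕ} (𝒜 : Finset ((Fin d → Fin 3) → ℝ))
    (hpoly : ∀ A ∈ 𝒜, Polystochastic A)
    (h3 : ∀ A₁ ∈ 𝒜, ∀ A₂ ∈ 𝒜, ∀ A₃ ∈ 𝒜, A₁ ≠ A₂ → A₁ ≠ A₃ → A₂ ≠ A₃ →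
      ¬ ∃ B ∈ Set.extremePoints ℝ (Omega 3 d),
        ∀ β, B β ≠ 0 → A₁ β ≠ 0 ∧ A₂ β ≠ 0 ∧ A₃ β ≠ 0) :
    (𝒜.card : ℝ) / 2 ≤ ((Set.extremePoints ℝ (Omega 3 d)).ncard : ℝ) := by
  classical
  choose! f hfvertex hfsupp using fun A (hA : A ∈ 𝒜) =>
    (hpoly A hA).exists_mem_extremePoints_support_subset
  have hfiber : ∀ B ∈ 𝒜.image f, (𝒜.filter fun A => f A = B).card ≤ 2 := by
    intro B _
    by_contra! hgt
    obtain ⟨A₁, h₁, A₂, h₂, A₃, h₃, h12, h13, h23⟩ := Finset.two_lt_card.1 hgt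
    simp only [Finset.mem_filter] at h₁ h₂ h₃
    refine h3 A₁ h₁.1 A₂ h₂.1 A₃ h₃.1 h12 h13 h23 ⟨B, h₁.2 ▸ hfvertex A₁ h₁.1, fun β hβ => ?_⟩
    exact ⟨hfsupp A₁ h₁.1 β (h₁.2 ▸ hβ), hfsupp A₂ h₂.1 β (h₂.2 ▸ hβ),
      hfsupp A₃ h₃.1 β (h₃.2 ▸ hβ)⟩
  have himage : ↑(𝒜.image f) ⊆ (Omega 3 d).extremePoints ℝ := by
    simpa [Set.subset_def] using hfvertex
  have hcard : 𝒜.card ≤ 2 * ((Omega 3 d).extremePoints ℝ).ncard := calc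
    𝒜.card ≤ 2 * (𝒜.image f).card := Finset.card_le_mul_card_image _ 2 hfiber
    _ ≤ 2 * ((Omega 3 d).extremePoints ℝ).ncard := by
      rw [← Set.ncard_coe_finset]
      exact Nat.mul_le_mul_left 2 (Set.ncard_le_ncard himage Omega.finite_extremePoints)
  rw [div_le_iff₀ two_pos, mul_comm]
  exact_mod_cast hcard
end
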